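/- Let {(X, h_i)}_{i=1}^∞ be a sequence of representable polymatroids on a finite ground set X and {c_i}_{i=1}^∞ positive reals such that c_i·h_i converges coordinatewise to a rank function h_0. Let 0 ≤ ε ≤ h_0(X). For each i define g_i(A) := min(c_i·h_i(A), c_i·h_i(X) − ε) and define g_0(A) := min(h_0(A), h_0(X) − ε). Then g_i converges coordinatewise to g_0, and g_0 is almost representable. -/

import Mathlib

open Module Filter Topology

/-- A representation of a rank function on ground set `X` by subspaces of a
finite-dimensional vector space `W` over a finite field `F`. -/
structure SubspaceRep {X : Type} (h : Finset X → ℝ) where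
  F : Type
  W : Type
  [fieldF : Field F]
  [fintypeF : Fintype F]
  [addCommGroupW : AddCommGroup W]
  [moduleW : Module F W]
  [finiteDimensionalW : FiniteDimensional F W]
  V : X → Submodule F W
  rank_eq : ∀ A : Finset X, h A = (Module.finrank F ↥(A.sup V) : ℝ)

/-- `h` is representable: it is `q`-representable for some prime power `q`
(equivalently, it is given by subspace dimensions over some finite field). -/
def IsRepresentable {X : Type} (h : Finset X → ℝ) : Prop := Nonempty (SubspaceRep h)

/-- `h` is even representable: `2^m`-representable for some positive integer `m`. -/
def EvenRepresentable {X : Type} (h : Finset X → ℝ) : Prop :=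
  ∃ (r : SubspaceRep h) (m : ℕ), 0 < m ∧ Nat.card r.F = 2 ^ m

/-- `h` is odd representable: `p^m`-representable for some odd prime `p` and positive `m`. -/
def OddRepresentable {X : Type} (h : Finset X → ℝ) : Prop :=
  ∃ (r : SubspaceRep h) (p m : ℕ), p.Prime ∧ Odd p ∧ 0 < m ∧ Nat.card r.F = p ^ m

/-- Polymatroid axioms: normalization, nonnegativity, monotonicity, submodularity. -/
def IsPolymatroid {X : Type} [DecidableEq X] (h : Finset X → ℝ) : Prop :=
  h ∅ = 0 ∧ (∀ A, 0 ≤ h A) ∧ (∀ A B : Finset X, A ⊆ B → h A ≤ h B) ∧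
    ∀ A B : Finset X, h (A ∪ B) + h (A ∩ B) ≤ h A + h B

/-- The Ingleton expression `J_h(A1,A2,A3,A4)`. -/
noncomputable def ingletonJ {X : Type} [DecidableEq X] (h : Finset X → ℝ)
    (A1 A2 A3 A4 : Finset X) : ℝ :=
  h (A1 ∪ A2) + h (A1 ∪ A3) + h (A1 ∪ A4) + h (A2 ∪ A3) + h (A2 ∪ A4)
    - h A1 - h A2 - h (A3 ∪ A4) - h (A1 ∪ A2 ∪ A3) - h (A1 ∪ A2 ∪ A4)

/-- `h` is Ingletonian if all Ingleton expressions are nonnegative. -/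
def IsIngletonian {X : Type} [DecidableEq X] (h : Finset X → ℝ) : Prop :=
  ∀ A1 A2 A3 A4 : Finset X, 0 ≤ ingletonJ h A1 A2 A3 A4

/-- The convex cone generated by a set `S` of rank functions (viewed as points of
`ℝ^{2^|X|}`): all finite nonnegative combinations of elements of `S`. -/
def coneHull {X : Type} (S : Set (Finset X → ℝ)) : Set (Finset X → ℝ) :=
  {x | ∃ (m : ℕ) (c : Fin m → ℝ) (f : Fin m → Finset X → ℝ),
    (∀ i, 0 ≤ c i) ∧ (∀ i, f i ∈ S) ∧ x = ∑ i, c i • f i}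

/-- `h` is almost representable: a coordinatewise limit `h = lim_i c_i g_i` with
`c_i > 0` and each `g_i` representable. -/
def AlmostRepresentable {X : Type} (h : Finset X → ℝ) : Prop :=
  ∃ (g : ℕ → Finset X → ℝ) (c : ℕ → ℝ), (∀ i, IsRepresentable (g i)) ∧
    (∀ i, 0 < c i) ∧ ∀ A : Finset X, Tendsto (fun i => c i * g i A) atTop (𝓝 (h A))

/-- `h` is almost even representable. -/
def AlmostEvenRepresentable {X : Type} (h : Finset X → ℝ) : Prop :=
  ∃ (g : ℕ → Finset X → ℝ) (c : ℕ → ℝ), (∀ i, EvenRepresentable (g i)) ∧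
    (∀ i, 0 < c i) ∧ ∀ A : Finset X, Tendsto (fun i => c i * g i A) atTop (𝓝 (h A))

/-- `h` is almost odd representable. -/
def AlmostOddRepresentable {X : Type} (h : Finset X → ℝ) : Prop :=
  ∃ (g : ℕ → Finset X → ℝ) (c : ℕ → ℝ), (∀ i, OddRepresentable (g i)) ∧
    (∀ i, 0 < c i) ∧ ∀ A : Finset X, Tendsto (fun i => c i * g i A) atTop (𝓝 (h A))

/-- `h` is cc-representable: it lies in the closure of the convex cone generated by
the set `Υ[X]` of representable rank functions on `X`. -/
def CcRepresentable {X : Type} (h : Finset X → ℝ) : Prop :=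
  h ∈ closure (coneHull {g : Finset X → ℝ | IsRepresentable g})

/-- A matroid: an integer-valued polymatroid with `h(A) ≤ |A|`. -/
def IsIntMatroid {X : Type} [DecidableEq X] (h : Finset X → ℝ) : Prop :=
  IsPolymatroid h ∧ (∀ A : Finset X, ∃ z : ℤ, h A = (z : ℝ)) ∧ ∀ A : Finset X, h A ≤ A.card

/-- A circuit of a matroid: a minimal dependent set. -/
def IsCircuit {X : Type} (h : Finset X → ℝ) (C : Finset X) : Prop :=
  h C < C.card ∧ ∀ D : Finset X, D ⊂ C → h D = D.card

/-- A connected matroid: every pair of distinct elements lies in a common circuit. -/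
def IsConnectedMatroid {X : Type} [DecidableEq X] (h : Finset X → ℝ) : Prop :=
  IsIntMatroid h ∧ ∀ x y : X, x ≠ y → ∃ C : Finset X, IsCircuit h C ∧ x ∈ C ∧ y ∈ C


/-!
Over a field with more than `2^|X|` elements, a vector `x` of the total space `V_X` can be chosen
outside every proper subspace of the form `V_A`; quotienting by `x` lowers `dim V_A` by one exactly
when `V_A = V_X`, which realizes `min (h A) (h X - 1)`. Iterating truncates a representable `h`
at any integer `k`, and base change to a degree-`M` extension followed by restriction of scalars
realizes `M • h`. With `M_i / c_i → ∞`,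
`(c_i / M_i) · min (M_i h_i A, ⌊T M_i / c_i⌋) = min (c_i h_i A, ⌊T M_i / c_i⌋ c_i / M_i)`
then converges to `min (h_0 A) T`.
-/

open TensorProduct

attribute [instance] SubspaceRep.fieldF SubspaceRep.fintypeF SubspaceRep.addCommGroupW
  SubspaceRep.moduleW SubspaceRep.finiteDimensionalW

namespace Submodule

section BaseChange

variable {R A M : Type*} [CommSemiring R] [Semiring A] [Algebra R A] [AddCommMonoid M]
  [Module R M]

theorem baseChange_sup (p q : Submodule R M) :
    (p ⊔ q).baseChange A = p.baseChange A ⊔ q.baseChange A := by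
  have (P Q : Submodule R (A ⊗[R] M)) : P ⊔ Q = span R (P ∪ Q) := by
    rw [span_union, span_eq, span_eq]
  rw [baseChange_eq_span, baseChange_eq_span, baseChange_eq_span, map_sup, this,
    span_span_of_tower, span_union]

theorem baseChange_finset_sup {ι : Type*} (s : Finset ι) (p : ι → Submodule R M) :
    (s.sup p).baseChange A = s.sup fun i => (p i).baseChange A := by
  classical
  induction s using Finset.induction_on with
  | empty => simp
  | insert i s _ ih => simp only [Finset.sup_insert, baseChange_sup, ih]

end BaseChange

variable {K V : Type*} [Field K] [AddCommGroup V] [Module K V]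

theorem finrank_baseChange (L : Type*) [Field L] [Algebra K L] (p : Submodule K V) :
    finrank L (p.baseChange L) = finrank K p :=
  (toBaseChange.toLinearEquiv L p).finrank_eq.symm.trans Module.finrank_baseChange

theorem finrank_restrictScalars {L E : Type*} [Field L] [Algebra K L] [Module.Finite K L]
    [AddCommGroup E] [Module K E] [Module L E] [IsScalarTower K L E] (U : Submodule L E) :
    finrank K (U.restrictScalars K) = finrank K L * finrank L U :=
  (Module.finrank_mul_finrank K L U).symm

theorem finrank_map_mkQ_add_finrank_inf (U N : Submodule K V) [FiniteDimensional K U] :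
    finrank K (U.map N.mkQ) + finrank K ↥(U ⊓ N) = finrank K U := by
  have := LinearMap.finrank_range_add_finrank_ker (N.mkQ ∘ₗ U.subtype)
  rwa [LinearMap.range_comp, range_subtype, LinearMap.ker_comp, ker_mkQ,
    ← finrank_map_subtype_eq, map_comap_subtype] at this

theorem finrank_map_mkQ_span_singleton_of_notMem {U : Submodule K V} [FiniteDimensional K U]
    {x : V} (hx : x ∉ U) : finrank K (U.map (K ∙ x).mkQ) = finrank K U := by
  have hU : U ⊓ (K ∙ x) = ⊥ :=
    disjoint_iff.mp (disjoint_span_singleton.mpr fun h => absurd h hx)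
  have := finrank_map_mkQ_add_finrank_inf U (K ∙ x)
  rwa [hU, finrank_bot, add_zero] at this

theorem finrank_map_mkQ_span_singleton_add_one {U : Submodule K V} [FiniteDimensional K U]
    {x : V} (hx : x ∈ U) (hx0 : x ≠ 0) : finrank K (U.map (K ∙ x).mkQ) + 1 = finrank K U := by
  have := finrank_map_mkQ_add_finrank_inf U (K ∙ x)
  rwa [inf_eq_right.mpr ((span_singleton_le_iff_mem _ _).mpr hx), finrank_span_singleton hx0]
    at this

theorem exists_mem_forall_notMem_of_card_lt {ι : Type*} [Fintype ι] (P : Submodule K V)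
    (p : ι → Submodule K V) (hp : ∀ i, ¬P ≤ p i) (hcard : Fintype.card ι < ENat.card K) :
    ∃ x ∈ P, ∀ i, x ∉ p i := by
  have hne : ∀ i, (p i).comap P.subtype ≠ ⊤ := fun i => by
    simpa [comap_subtype_eq_top] using hp i
  have := iUnion_ssubset_of_forall_ne_top_of_card_lt Finset.univ _ hne (by simpa using hcard)
  obtain ⟨⟨x, hxP⟩, -, hx⟩ := Set.exists_of_ssubset this
  exact ⟨x, hxP, fun i hi => hx (Set.mem_biUnion (Finset.mem_univ i) hi)⟩

end Submodule

def SubspaceRep.baseChange {X : Type} {h : Finset X → ℝ} (r : SubspaceRep h) (L : Type)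
    [Field L] [Fintype L] [Algebra r.F L] : SubspaceRep h where
  F := L
  W := L ⊗[r.F] r.W
  V i := (r.V i).baseChange L
  rank_eq A := by
    rw [← Submodule.baseChange_finset_sup, Submodule.finrank_baseChange, r.rank_eq]

namespace IsRepresentable

variable {X : Type} {h : Finset X → ℝ}

theorem mono (hr : IsRepresentable h) {A B : Finset X} (hAB : A ⊆ B) : h A ≤ h B := by
  obtain ⟨r⟩ := hr
  rw [r.rank_eq, r.rank_eq]
  exact_mod_cast Submodule.finrank_mono (Finset.sup_mono hAB)

theorem exists_subspaceRep_card_gt (hr : IsRepresentable h) (N : ℕ) :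
    ∃ r : SubspaceRep h, N < Fintype.card r.F := by
  obtain ⟨r⟩ := hr
  have : Fact (ringChar r.F).Prime := ⟨CharP.char_is_prime r.F _⟩
  let L := FiniteField.Extension r.F (ringChar r.F) (N + 1)
  let : Fintype L := Fintype.ofFinite L
  refine ⟨r.baseChange L, ?_⟩
  have hL : Nat.card L = Nat.card r.F ^ (N + 1) := FiniteField.natCard_extension ..
  have h2 : 1 < Nat.card r.F := by rw [Nat.card_eq_fintype_card]; exact Fintype.one_lt_card
  change N < Fintype.card L
  rw [← Nat.card_eq_fintype_card, hL]
  calc N < 2 ^ (N + 1) := Nat.lt_two_pow_self.trans (Nat.pow_lt_pow_succ one_lt_two)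
    _ ≤ _ := Nat.pow_le_pow_left h2 _

theorem natCast_mul (hr : IsRepresentable h) (M : ℕ) [NeZero M] :
    IsRepresentable fun A => M * h A := by
  obtain ⟨r⟩ := hr
  have : Fact (ringChar r.F).Prime := ⟨CharP.char_is_prime r.F _⟩
  let L := FiniteField.Extension r.F (ringChar r.F) M
  refine ⟨{ F := r.F
            W := L ⊗[r.F] r.W
            V i := ((r.V i).baseChange L).restrictScalars r.F
            rank_eq A := ?_ }⟩
  have hsup : (A.sup fun i => ((r.V i).baseChange L).restrictScalars r.F) =
      ((A.sup r.V).baseChange L).restrictScalars r.F := by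
    rw [Submodule.baseChange_finset_sup]
    exact (map_finset_sup (Submodule.restrictScalarsLatticeHom r.F L _) A _).symm
  rw [r.rank_eq, hsup, Submodule.finrank_restrictScalars, Submodule.finrank_baseChange,
    FiniteField.finrank_extension, Nat.cast_mul]

section

variable [Fintype X]

theorem min_sub_one (hr : IsRepresentable h) (h1 : 1 ≤ h Finset.univ) :
    IsRepresentable fun A => min (h A) (h Finset.univ - 1) := by
  classical
  obtain ⟨r, hcard⟩ := hr.exists_subspaceRep_card_gt (Fintype.card (Finset X))
  set P := Finset.univ.sup r.V
  have hhP : h Finset.univ = finrank r.F P := r.rank_eq Finset.univ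
  obtain ⟨x, hxP, hx⟩ := Submodule.exists_mem_forall_notMem_of_card_lt P
    (fun A : {A : Finset X // ¬P ≤ A.sup r.V} => A.1.sup r.V) (fun A => A.2)
    (by rw [ENat.card_eq_coe_fintype_card]; exact_mod_cast (Fintype.card_subtype_le _).trans_lt hcard)
  have hx0 : x ≠ 0 := by
    refine fun h0 => hx ⟨∅, fun hP => ?_⟩ (by simp [h0])
    rw [Finset.sup_empty, le_bot_iff] at hP
    rw [hP, finrank_bot, Nat.cast_zero] at hhP
    linarith
  refine ⟨{ F := r.F
            W := r.W ⧸ (r.F ∙ x)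
            V i := (r.V i).map (r.F ∙ x).mkQ
            rank_eq A := ?_ }⟩
  have hsup : (A.sup fun i => (r.V i).map (r.F ∙ x).mkQ) = (A.sup r.V).map (r.F ∙ x).mkQ := by
    simp only [Finset.sup_eq_iSup, Submodule.map_iSup]
  have hAP : A.sup r.V ≤ P := Finset.sup_mono A.subset_univ
  rw [hsup, r.rank_eq, hhP]
  by_cases hPA : P ≤ A.sup r.V
  · have hA : A.sup r.V = P := le_antisymm hAP hPA
    rw [hA, ← Submodule.finrank_map_mkQ_span_singleton_add_one hxP hx0]
    push_cast
    rw [add_sub_cancel_right, min_eq_right (le_add_of_nonneg_right zero_le_one)]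
  · rw [Submodule.finrank_map_mkQ_span_singleton_of_notMem (hx ⟨A, hPA⟩), min_eq_left]
    have hlt := Submodule.finrank_lt_finrank_of_lt (lt_of_le_not_ge hAP hPA)
    have : (finrank r.F ↥(A.sup r.V) : ℝ) + 1 ≤ finrank r.F P := by exact_mod_cast hlt
    linarith

theorem min_eq_self_of_univ_le (hr : IsRepresentable h) {t : ℝ} (ht : h Finset.univ ≤ t) :
    (fun A => min (h A) t) = h :=
  funext fun A => min_eq_left ((hr.mono A.subset_univ).trans ht)

theorem min_natCast (hr : IsRepresentable h) (k : ℕ) :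
    IsRepresentable fun A => min (h A) k := by
  obtain ⟨N, hN⟩ : ∃ N : ℕ, h Finset.univ = N := hr.elim fun r => ⟨_, r.rank_eq _⟩
  induction N generalizing h with
  | zero => rwa [hr.min_eq_self_of_univ_le (by simp [hN])]
  | succ N ih =>
    rcases le_or_gt (N + 1) k with hk | hk
    · rwa [hr.min_eq_self_of_univ_le (by rw [hN]; exact_mod_cast hk)]
    have hkN : (k : ℝ) ≤ h Finset.univ - 1 := by
      rw [hN, Nat.cast_succ, add_sub_cancel_right]
      exact_mod_cast Nat.lt_succ_iff.mp hk
    convert ih (hr.min_sub_one (by rw [hN]; simp)) (by simp [hN]) using 2 with A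
    rw [min_assoc, min_eq_right hkN]

end

end IsRepresentable

theorem exists_nat_div_tendsto_atTop (c : ℕ → ℝ) (hc : ∀ i, 0 < c i) :
    ∃ M : ℕ → ℕ, (∀ i, M i ≠ 0) ∧ Tendsto (fun i => (M i : ℝ) / c i) atTop atTop := by
  refine ⟨fun i => ⌈(i + 1) * c i⌉₊, fun i => (Nat.ceil_pos.mpr ?_).ne', ?_⟩
  · exact mul_pos (by positivity) (hc i)
  · refine tendsto_atTop_mono (fun i => ?_)
      (tendsto_atTop_add_const_right _ 1 tendsto_natCast_atTop_atTop)
    exact (le_div_iff₀ (hc i)).mpr (Nat.le_ceil _)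

theorem AlmostRepresentable.min_const {X : Type} [Fintype X] {h : Finset X → ℝ}
    (hh : AlmostRepresentable h) {T : ℝ} (hT : 0 ≤ T) :
    AlmostRepresentable fun A => min (h A) T := by
  obtain ⟨g, c, hg, hc, hlim⟩ := hh
  obtain ⟨M, hM, hMc⟩ := exists_nat_div_tendsto_atTop c hc
  have hM' : ∀ i, (0 : ℝ) < M i := fun i => Nat.cast_pos.mpr (Nat.pos_of_ne_zero (hM i))
  refine ⟨fun i A => min (M i * g i A) ⌊T * (M i / c i)⌋₊, fun i => c i / M i,
    fun i => ?_, fun i => div_pos (hc i) (hM' i), fun A => ?_⟩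
  · have : NeZero (M i) := ⟨hM i⟩
    exact ((hg i).natCast_mul (M i)).min_natCast _
  · have hfloor := (tendsto_nat_floor_mul_div_atTop hT).comp hMc
    refine ((hlim A).min hfloor).congr fun i => ?_
    have hci := (hc i).ne'
    have hMi := (hM' i).ne'
    rw [mul_min_of_nonneg _ _ (div_pos (hc i) (hM' i)).le]
    simp only [Function.comp_apply]
    congr 1 <;> field_simp

theorem limit_of_perturbations_general {X : Type} [Fintype X]
    (h : ℕ → Finset X → ℝ) (c : ℕ → ℝ) (h0 : Finset X → ℝ)
    (hrep : ∀ i, IsRepresentable (h i))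
    (hc : ∀ i, 0 < c i)
    (hlim : ∀ A : Finset X, Tendsto (fun i => c i * h i A) atTop (𝓝 (h0 A)))
    (ε : ℝ) (hε1 : ε ≤ h0 Finset.univ) :
    (∀ A : Finset X,
      Tendsto (fun i => min (c i * h i A) (c i * h i Finset.univ - ε)) atTop
        (𝓝 (min (h0 A) (h0 Finset.univ - ε))))
    ∧ AlmostRepresentable (fun A => min (h0 A) (h0 Finset.univ - ε)) :=
  ⟨fun A => (hlim A).min ((hlim Finset.univ).sub_const ε),
    AlmostRepresentable.min_const ⟨h, c, hrep, hc, hlim⟩ (sub_nonneg.mpr hε1)⟩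

/-- if representable polymatroids `(X, h_i)` and positive reals `c_i`
satisfy `c_i·h_i → h_0` coordinatewise (with `h_0` a rank function), and
`0 ≤ ε ≤ h_0(X)`, then setting `g_i(A) := min(c_i h_i(A), c_i h_i(X) − ε)` and
`g_0(A) := min(h_0(A), h_0(X) − ε)`, we have `g_i → g_0` coordinatewise and `g_0` is
almost representable. -/
theorem limit_of_perturbations {X : Type} [Fintype X] [DecidableEq X]
    (h : ℕ → Finset X → ℝ) (c : ℕ → ℝ) (h0 : Finset X → ℝ)
    (hpoly : ∀ i, IsPolymatroid (h i)) (hrep : ∀ i, IsRepresentable (h i))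
    (hc : ∀ i, 0 < c i)
    (hlim : ∀ A : Finset X, Tendsto (fun i => c i * h i A) atTop (𝓝 (h0 A)))
    (h0poly : IsPolymatroid h0)
    (ε : ℝ) (hε0 : 0 ≤ ε) (hε1 : ε ≤ h0 Finset.univ) :
    (∀ A : Finset X,
      Tendsto (fun i => min (c i * h i A) (c i * h i Finset.univ - ε)) atTop
        (𝓝 (min (h0 A) (h0 Finset.univ - ε))))
    ∧ AlmostRepresentable (fun A => min (h0 A) (h0 Finset.univ - ε)) :=
  limit_of_perturbations_general h c h0 hrep hc hlim ε hε1
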